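/- arXiv:2411.06302 — 6 statements merged into one kernel-verified Lean document; each statement's English description precedes it below -/
import Mathlib

section
/- Let μ be a probability measure supported in [0,1] with |μ̂(ξ)| ≤ C(1+|ξ|)^{-β} for all ξ ∈ ℝ, for some C < ∞ and some β with 1/4 < β ≤ 1, and let (s,t) ∈ (0,1)². Let χ be a Schwartz function on ℝ whose Fourier transform χ̂ has compact support. Define, for δ > 0, J(δ) = ∫_{ℝ²} |μ̂(η) · μ̂(−((1−s)/(1−t))η) · μ̂(−((s/(1−t))η + ξ)) · μ̂((t/(1−t))η + ξ) · χ̂(δ^{-1}ξ)| dξ dη. Then J(δ) → 0 as δ → 0⁺. -/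
open MeasureTheory

/-- Fourier transform of a finite Borel measure on ℝ:
`μ̂(ξ) = ∫ e^{-2πiξx} dμ(x)`. -/
noncomputable def ftM (μ : Measure ℝ) (ξ : ℝ) : ℂ :=
  ∫ x, Complex.exp (((-(2 * Real.pi * ξ * x) : ℝ) : ℂ) * Complex.I) ∂μ


/-- Fourier transform on ℝ: `ĝ(ξ) = ∫ e^{-2πiξx} g(x) dx`. -/
noncomputable def ft1 (g : ℝ → ℂ) (ξ : ℝ) : ℂ :=
  ∫ x : ℝ, Complex.exp (((-(2 * Real.pi * ξ * x) : ℝ) : ℂ) * Complex.I) * g x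

/-!
For `δ ≤ R⁻¹`, where `χ̂` vanishes outside `[-R, R]`, the factor `χ̂(δ⁻¹ξ)` restricts the
integrand to `|ξ| ≤ 1`. There each of the four factors `μ̂(kη + w)` (with `k ≠ 0`, `|w| ≤ 1`) is
`O((1 + |η|)^{-β})`, so the product of the four is `O((1 + |η|)^{-4β})`, which is integrable
in `η` because `4β > 1`. Fubini then bounds `J(δ)` by a constant times
`∫ |χ̂(δ⁻¹ξ)| dξ = δ ∫ |χ̂|`, so `J(δ) = O(δ)`.
-/

open Filter Topology FourierTransform

lemma ft1_eq_fourier (g : ℝ → ℂ) : ft1 g = 𝓕 g := by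
  funext w
  rw [Real.fourier_eq']
  refine integral_congr_ae (.of_forall fun x => ?_)
  simp only [RCLike.inner_apply, smul_eq_mul, conj_trivial]
  congr 2
  push_cast
  ring

lemma continuous_ft1 {g : ℝ → ℂ} (hg : Integrable g) : Continuous (ft1 g) := by
  rw [ft1_eq_fourier]
  exact VectorFourier.fourierIntegral_continuous Real.continuous_fourierChar
    (L := innerₗ ℝ) continuous_inner hg

lemma one_add_abs_rpow_neg_le {β k w : ℝ} (hβ : 0 ≤ β) (hk : k ≠ 0) (hw : |w| ≤ 1) (η : ℝ) :
    (1 + |k * η + w|) ^ (-β) ≤ (min 1 |k| / 2) ^ (-β) * (1 + |η|) ^ (-β) := by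
  have hkη : |k| * |η| ≤ |k * η + w| + 1 := by
    rw [← abs_mul]
    calc |k * η| = |(k * η + w) - w| := by ring_nf
      _ ≤ |k * η + w| + |w| := abs_sub _ _
      _ ≤ |k * η + w| + 1 := by linarith
  have hlower : min 1 |k| / 2 * (1 + |η|) ≤ 1 + |k * η + w| := by
    nlinarith [min_le_left 1 |k|, min_le_right 1 |k|, abs_nonneg η, abs_nonneg (k * η + w)]
  rw [← Real.mul_rpow (by positivity) (by positivity)]
  exact Real.rpow_le_rpow_of_nonpos (by positivity) hlower (neg_nonpos.mpr hβ)

section Decay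

variable {f : ℝ → ℂ} {C β : ℝ}

lemma exists_norm_comp_affine_le (hβ : 0 ≤ β) (hf : ∀ ξ, ‖f ξ‖ ≤ C * (1 + |ξ|) ^ (-β))
    {k : ℝ} (hk : k ≠ 0) :
    ∃ K, 0 ≤ K ∧ ∀ η w, |w| ≤ 1 → ‖f (k * η + w)‖ ≤ K * (1 + |η|) ^ (-β) := by
  have hC : 0 ≤ C := by simpa using (norm_nonneg _).trans (hf 0)
  refine ⟨C * (min 1 |k| / 2) ^ (-β), by positivity, fun η w hw => ?_⟩
  rw [mul_assoc]
  exact (hf _).trans (mul_le_mul_of_nonneg_left (one_add_abs_rpow_neg_le hβ hk hw η) hC)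

lemma exists_norm_mul_four_le (hβ : 0 ≤ β) (hf : ∀ ξ, ‖f ξ‖ ≤ C * (1 + |ξ|) ^ (-β))
    {a b c : ℝ} (ha : a ≠ 0) (hb : b ≠ 0) (hc : c ≠ 0) :
    ∃ D, ∀ ξ η, |ξ| ≤ 1 →
      ‖f η * f (-a * η) * f (-(b * η + ξ)) * f (c * η + ξ)‖ ≤ D * (1 + |η|) ^ (-(4 * β)) := by
  obtain ⟨K₀, hK₀, h₀⟩ := exists_norm_comp_affine_le hβ hf one_ne_zero
  obtain ⟨K₁, hK₁, h₁⟩ := exists_norm_comp_affine_le hβ hf (neg_ne_zero.mpr ha)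
  obtain ⟨K₂, hK₂, h₂⟩ := exists_norm_comp_affine_le hβ hf (neg_ne_zero.mpr hb)
  obtain ⟨K₃, hK₃, h₃⟩ := exists_norm_comp_affine_le hβ hf hc
  refine ⟨K₀ * K₁ * K₂ * K₃, fun ξ η hξ => ?_⟩
  have e₀ := h₀ η 0 (by simp)
  have e₁ := h₁ η 0 (by simp)
  have e₂ := h₂ η (-ξ) (by rwa [abs_neg])
  have e₃ := h₃ η ξ hξ
  rw [one_mul, add_zero] at e₀
  rw [add_zero] at e₁
  rw [neg_mul, ← neg_add] at e₂
  set X := (1 + |η|) ^ (-β)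
  have hX : (1 + |η|) ^ (-(4 * β)) = X ^ 4 := by
    rw [← Real.rpow_natCast, ← Real.rpow_mul (by positivity)]
    ring_nf
  rw [hX, norm_mul, norm_mul, norm_mul]
  calc ‖f η‖ * ‖f (-a * η)‖ * ‖f (-(b * η + ξ))‖ * ‖f (c * η + ξ)‖
      ≤ (K₀ * X) * (K₁ * X) * (K₂ * X) * (K₃ * X) := by
        gcongr
    _ = K₀ * K₁ * K₂ * K₃ * X ^ 4 := by ring

end Decay

section Localization

variable {F : ℝ × ℝ → ℂ} {ψ : ℝ → ℂ} {g : ℝ → ℝ}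

lemma integral_norm_mul_comp_inv_mul_le (hψ : Integrable ψ) (hg : Integrable g) {δ : ℝ}
    (hδ : 0 < δ) (hF : ∀ q : ℝ × ℝ, ψ (δ⁻¹ * q.1) ≠ 0 → ‖F q‖ ≤ g q.2) :
    ∫ q, ‖F q * ψ (δ⁻¹ * q.1)‖ ≤ δ * (∫ x, ‖ψ x‖) * ∫ η, g η := by
  have hpoint : ∀ q : ℝ × ℝ, ‖F q * ψ (δ⁻¹ * q.1)‖ ≤ ‖ψ (δ⁻¹ * q.1)‖ * g q.2 := by
    intro q
    by_cases h : ψ (δ⁻¹ * q.1) = 0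
    · simp [h]
    · rw [norm_mul, mul_comm]
      exact mul_le_mul_of_nonneg_left (hF q h) (norm_nonneg _)
  have hscaled : Integrable fun ξ => ‖ψ (δ⁻¹ * ξ)‖ :=
    (hψ.comp_mul_left' (inv_ne_zero hδ.ne')).norm
  calc ∫ q, ‖F q * ψ (δ⁻¹ * q.1)‖ ≤ ∫ q : ℝ × ℝ, ‖ψ (δ⁻¹ * q.1)‖ * g q.2 :=
        integral_mono_of_nonneg (.of_forall fun _ => norm_nonneg _)
          (by rw [Measure.volume_eq_prod]; exact hscaled.mul_prod hg) (.of_forall hpoint)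
    _ = (∫ ξ, ‖ψ (δ⁻¹ * ξ)‖) * ∫ η, g η := by
        rw [Measure.volume_eq_prod]
        exact integral_prod_mul (fun ξ => ‖ψ (δ⁻¹ * ξ)‖) g
    _ = δ * (∫ x, ‖ψ x‖) * ∫ η, g η := by
        rw [Measure.integral_comp_inv_mul_left (fun x => ‖ψ x‖), abs_of_pos hδ, smul_eq_mul]

theorem tendsto_integral_norm_mul_comp_inv_mul (hψc : Continuous ψ) (hψ : HasCompactSupport ψ)
    (hg : Integrable g) (hF : ∀ ξ η, |ξ| ≤ 1 → ‖F (ξ, η)‖ ≤ g η) :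
    Tendsto (fun δ => ∫ q, ‖F q * ψ (δ⁻¹ * q.1)‖) (𝓝[>] 0) (𝓝 0) := by
  obtain ⟨R, hR0, hR⟩ := hψ.isBounded.subset_closedBall_lt 0 0
  have hsupp : ∀ x, ψ x ≠ 0 → |x| ≤ R := fun x hx => by
    simpa using hR (subset_tsupport ψ hx)
  have hbound : ∀ δ ∈ Set.Ioo 0 R⁻¹,
      ∫ q, ‖F q * ψ (δ⁻¹ * q.1)‖ ≤ δ * (∫ x, ‖ψ x‖) * ∫ η, g η := by
    rintro δ ⟨hδ0, hδR⟩
    refine integral_norm_mul_comp_inv_mul_le (hψc.integrable_of_hasCompactSupport hψ) hg hδ0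
      fun q hq => hF q.1 q.2 ?_
    have hq1 : δ⁻¹ * |q.1| ≤ R := by simpa [abs_mul, abs_of_pos hδ0] using hsupp _ hq
    calc |q.1| = δ * (δ⁻¹ * |q.1|) := by field_simp
      _ ≤ R⁻¹ * R := by gcongr
      _ = 1 := inv_mul_cancel₀ hR0.ne'
  have hlim : Tendsto (fun δ : ℝ => δ * (∫ x, ‖ψ x‖) * ∫ η, g η) (𝓝[>] 0) (𝓝 0) := by
    refine (Continuous.tendsto' ?_ 0 0 (by simp)).mono_left nhdsWithin_le_nhds
    fun_prop
  refine squeeze_zero' (.of_forall fun δ => integral_nonneg fun q => norm_nonneg _) ?_ hlim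
  filter_upwards [Ioo_mem_nhdsGT (inv_pos.mpr hR0)] with δ hδ using hbound δ hδ

end Localization

theorem stmt8_general (μ : Measure ℝ)
    (C β : ℝ) (hβ0 : 1 / 4 < β)
    (hdecay : ∀ ξ : ℝ, ‖ftM μ ξ‖ ≤ C * (1 + |ξ|) ^ (-β))
    (s t : ℝ) (hs : s ∈ Set.Ioo (0 : ℝ) 1) (ht : t ∈ Set.Ioo (0 : ℝ) 1)
    (χ : SchwartzMap ℝ ℂ) (hχ : HasCompactSupport (ft1 ⇑χ)) :
    Filter.Tendsto (fun δ : ℝ =>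
      ∫ q : ℝ × ℝ,
        ‖ftM μ q.2 * ftM μ (-((1 - s) / (1 - t)) * q.2) *
          ftM μ (-(s / (1 - t) * q.2 + q.1)) * ftM μ (t / (1 - t) * q.2 + q.1) *
          ft1 ⇑χ (δ⁻¹ * q.1)‖)
      (nhdsWithin 0 (Set.Ioi 0)) (nhds 0) := by
  have h1t : 1 - t ≠ 0 := sub_ne_zero.mpr ht.2.ne'
  obtain ⟨D, hD⟩ := exists_norm_mul_four_le (by linarith) hdecay
    (div_ne_zero (sub_ne_zero.mpr hs.2.ne') h1t) (div_ne_zero hs.1.ne' h1t)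
    (div_ne_zero ht.1.ne' h1t)
  have hint : Integrable fun η : ℝ => D * (1 + |η|) ^ (-(4 * β)) :=
    (integrable_one_add_norm (E := ℝ) (μ := volume) (r := 4 * β) (by simp; linarith)).const_mul D
  exact tendsto_integral_norm_mul_comp_inv_mul (continuous_ft1 χ.integrable) hχ hint
    fun ξ η hξ => hD ξ η hξ

/-- For a probability measure `μ` supported in `[0,1]` with `|μ̂(ξ)| ≤ C(1+|ξ|)^{-β}`,
`1/4 < β ≤ 1`, `(s,t) ∈ (0,1)²`, and a Schwartz `χ` on ℝ with compactly supported Fourier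
transform, the quantity
`J(δ) = ∫_{ℝ²} |μ̂(η) μ̂(−((1−s)/(1−t))η) μ̂(−((s/(1−t))η+ξ)) μ̂((t/(1−t))η+ξ) χ̂(δ⁻¹ξ)| dξ dη`
tends to `0` as `δ → 0⁺`. -/
theorem stmt8 (μ : Measure ℝ) (hprob : IsProbabilityMeasure μ)
    (hμsupp : μ (Set.Icc (0 : ℝ) 1)ᶜ = 0)
    (C β : ℝ) (hβ0 : 1 / 4 < β) (hβ1 : β ≤ 1)
    (hdecay : ∀ ξ : ℝ, ‖ftM μ ξ‖ ≤ C * (1 + |ξ|) ^ (-β))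
    (s t : ℝ) (hs : s ∈ Set.Ioo (0 : ℝ) 1) (ht : t ∈ Set.Ioo (0 : ℝ) 1)
    (χ : SchwartzMap ℝ ℂ) (hχ : HasCompactSupport (ft1 ⇑χ)) :
    Filter.Tendsto (fun δ : ℝ =>
      ∫ q : ℝ × ℝ,
        ‖ftM μ q.2 * ftM μ (-((1 - s) / (1 - t)) * q.2) *
          ftM μ (-(s / (1 - t) * q.2 + q.1)) * ftM μ (t / (1 - t) * q.2 + q.1) *
          ft1 ⇑χ (δ⁻¹ * q.1)‖)
      (nhdsWithin 0 (Set.Ioi 0)) (nhds 0) :=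
  stmt8_general μ C β hβ0 hdecay s t hs ht χ hχ
end

section
/- Let μ be a probability measure supported in [0,1] with |μ̂(ξ)| ≤ C(1+|ξ|)^{-β} for all ξ ∈ ℝ, for some C < ∞ and some β > 1/4, and let f be a Schwartz function on ℝ³ whose Fourier transform has compact support. Then the function F^{[f]}(s,t) = ∫_{ℝ⁴} μ̂(ξ) ∏_{i=1}^{3} μ̂(η_i) · f̂(−η₁ − (s/(1−t))ξ, −η₂ − ((1−s)/(1−t))ξ, −η₃ + (t/(1−t))ξ) dξ dη₁ dη₂ dη₃ is continuous on (0,1)². -/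
open MeasureTheory

/-- Fourier transform on ℝ³ (identified with `ℝ × ℝ × ℝ`):
`ĝ(ξ) = ∫_{ℝ³} e^{-2πi ξ·x} g(x) dx`. -/
noncomputable def ft3 (g : ℝ × ℝ × ℝ → ℂ) (ξ : ℝ × ℝ × ℝ) : ℂ :=
  ∫ x : ℝ × ℝ × ℝ,
    Complex.exp (((-(2 * Real.pi * (ξ.1 * x.1 + ξ.2.1 * x.2.1 + ξ.2.2 * x.2.2)) : ℝ) : ℂ)
      * Complex.I) * g x

/-! The shear `η ↦ η + ξ v` with `v = (s/(1-t), (1-s)/(1-t), -t/(1-t))` moves the parameters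
out of `f̂` and into three of the factors: `F^{[f]}(s,t) = ∫ μ̂(ξ) ∏ᵢ μ̂(ηᵢ - vᵢ ξ) f̂(-η)`.
On the support of `f̂` we have `|η| ≤ R`, so as long as the `vᵢ` stay away from `0` each factor
`|μ̂(ηᵢ - vᵢ ξ)|` is at most a constant times `(1+|ξ|)^{-β}`. The integrand is therefore
dominated, locally uniformly in `v`, by `(1+|ξ|)^{-4β} |f̂(-η)|`, which is integrable because
`4β > 1`, and dominated convergence gives continuity. -/

open Filter Topology

section Shear

variable {E F : Type*} [NormedAddCommGroup E] [NormedSpace ℝ E] [MeasurableSpace E] [BorelSpace E]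
  [SecondCountableTopology E] [NormedAddCommGroup F] [NormedSpace ℝ F]

noncomputable def shearEquiv (v : E) : ℝ × E ≃ᵐ ℝ × E where
  toFun p := (p.1, p.2 + p.1 • v)
  invFun p := (p.1, p.2 - p.1 • v)
  left_inv p := by simp
  right_inv p := by simp
  measurable_toFun := by
    change Measurable fun p : ℝ × E => (p.1, p.2 + p.1 • v)
    fun_prop
  measurable_invFun := by
    change Measurable fun p : ℝ × E => (p.1, p.2 - p.1 • v)
    fun_prop

theorem measurePreserving_shearEquiv (ν : Measure ℝ) [SFinite ν] (μ : Measure E) [SFinite μ]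
    [μ.IsAddRightInvariant] (v : E) : MeasurePreserving (shearEquiv v) (ν.prod μ) (ν.prod μ) :=
  (MeasurePreserving.id ν).skew_product (g := fun x y => y + x • v) (by fun_prop)
    (ae_of_all _ fun x => map_add_right_eq_self μ (x • v))

theorem integral_comp_shear (ν : Measure ℝ) [SFinite ν] (μ : Measure E) [SFinite μ]
    [μ.IsAddRightInvariant] (v : E) (G : ℝ × E → F) :
    ∫ p, G (p.1, p.2 + p.1 • v) ∂(ν.prod μ) = ∫ p, G p ∂(ν.prod μ) :=
  (measurePreserving_shearEquiv ν μ v).integral_comp' G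

end Shear

theorem continuous_ftM (μ : Measure ℝ) [IsFiniteMeasure μ] : Continuous (ftM μ) :=
  continuous_of_dominated (bound := fun _ => 1)
    (fun ξ => Continuous.aestronglyMeasurable (by fun_prop))
    (fun ξ => ae_of_all _ fun x => (Complex.norm_exp_ofReal_mul_I _).le)
    (integrable_const 1) (ae_of_all _ fun x => by fun_prop)

theorem continuous_ft3 {g : ℝ × ℝ × ℝ → ℂ} (hg : Integrable g) : Continuous (ft3 g) :=
  continuous_of_dominated (bound := fun x => ‖g x‖)
    (fun ξ => (Continuous.aestronglyMeasurable (by fun_prop)).mul hg.aestronglyMeasurable)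
    (fun ξ => ae_of_all _ fun x => by rw [norm_mul, Complex.norm_exp_ofReal_mul_I, one_mul])
    hg.norm (ae_of_all _ fun x => by fun_prop)

section Decay

theorem mul_one_add_abs_le_mul_one_add_abs_sub {ε R a η : ℝ} (hε : 0 ≤ ε) (ha : ε ≤ |a|)
    (hη : |η| ≤ R) (ξ : ℝ) :
    ε * (1 + |ξ|) ≤ (1 + ε + R) * (1 + |η - a * ξ|) := by
  have hR : 0 ≤ R := (abs_nonneg η).trans hη
  have hsub : |a| * |ξ| - |η| ≤ |η - a * ξ| := by
    rw [← abs_mul, abs_sub_comm]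
    exact abs_sub_abs_le_abs_sub _ _
  nlinarith [abs_nonneg ξ, abs_nonneg (η - a * ξ)]

theorem rpow_neg_le_of_le_mul {x y L β : ℝ} (hx : 0 < x) (hL : 0 < L) (hβ : 0 ≤ β)
    (h : x ≤ L * y) : y ^ (-β) ≤ L ^ β * x ^ (-β) :=
  calc y ^ (-β) ≤ (x / L) ^ (-β) :=
        Real.rpow_le_rpow_of_nonpos (by positivity) (by rwa [div_le_iff₀' hL]) (by linarith)
    _ = L ^ β * x ^ (-β) := by
        rw [Real.div_rpow hx.le hL.le, Real.rpow_neg hL.le, div_inv_eq_mul, mul_comm]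

variable {E : Type*} [NormedAddCommGroup E] {φ : ℝ → E} {C β : ℝ}

theorem norm_comp_sub_mul_le (hβ : 0 ≤ β) (hφ : ∀ ξ, ‖φ ξ‖ ≤ C * (1 + |ξ|) ^ (-β))
    {ε R a η : ℝ} (hε : 0 < ε) (ha : ε ≤ |a|) (hη : |η| ≤ R) (ξ : ℝ) :
    ‖φ (η - a * ξ)‖ ≤ C * ((1 + ε + R) / ε) ^ β * (1 + |ξ|) ^ (-β) := by
  have hC : 0 ≤ C := by simpa using (norm_nonneg _).trans (hφ 0)
  have hR : 0 ≤ R := (abs_nonneg η).trans hη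
  have hle : 1 + |ξ| ≤ (1 + ε + R) / ε * (1 + |η - a * ξ|) := by
    rw [div_mul_eq_mul_div, le_div_iff₀ hε, mul_comm]
    exact mul_one_add_abs_le_mul_one_add_abs_sub hε.le ha hη ξ
  calc ‖φ (η - a * ξ)‖ ≤ C * (1 + |η - a * ξ|) ^ (-β) := hφ _
    _ ≤ C * (((1 + ε + R) / ε) ^ β * (1 + |ξ|) ^ (-β)) := by
        gcongr
        exact rpow_neg_le_of_le_mul (by positivity) (by positivity) hβ hle
    _ = C * ((1 + ε + R) / ε) ^ β * (1 + |ξ|) ^ (-β) := (mul_assoc _ _ _).symm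

end Decay

-- Instance search does not see `volume` on a product as a `Measure.prod`.
instance : (volume : Measure (ℝ × ℝ × ℝ)).IsAddHaarMeasure :=
  Measure.prod.instIsAddHaarMeasure _ _

def shearedIntegrand (φ : ℝ → ℂ) (g : ℝ × ℝ × ℝ → ℂ) (v : ℝ × ℝ × ℝ) (p : ℝ × ℝ × ℝ × ℝ) : ℂ :=
  φ p.1 * φ (p.2.1 - v.1 * p.1) * φ (p.2.2.1 - v.2.1 * p.1) * φ (p.2.2.2 - v.2.2 * p.1) * g (-p.2)

theorem integral_shearedIntegrand (φ : ℝ → ℂ) (g : ℝ × ℝ × ℝ → ℂ) (v : ℝ × ℝ × ℝ) :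
    ∫ p, shearedIntegrand φ g v p = ∫ p : ℝ × ℝ × ℝ × ℝ, φ p.1 * φ p.2.1 * φ p.2.2.1 * φ p.2.2.2 *
      g (-p.2.1 - v.1 * p.1, -p.2.2.1 - v.2.1 * p.1, -p.2.2.2 - v.2.2 * p.1) := by
  rw [Measure.volume_eq_prod, ← integral_comp_shear _ _ v]
  congr 1 with p
  simp only [shearedIntegrand, Prod.fst_add, Prod.snd_add, Prod.smul_fst, Prod.smul_snd,
    smul_eq_mul]
  have hneg : -(p.2 + p.1 • v) =
      (-p.2.1 - v.1 * p.1, -p.2.2.1 - v.2.1 * p.1, -p.2.2.2 - v.2.2 * p.1) := by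
    ext <;> simp only [Prod.fst_neg, Prod.snd_neg, Prod.fst_add, Prod.snd_add, Prod.smul_fst,
      Prod.smul_snd, smul_eq_mul] <;> ring
  rw [hneg, mul_comm p.1 v.1, mul_comm p.1 v.2.1, mul_comm p.1 v.2.2]
  simp only [add_sub_cancel_right]

section Continuity

variable {φ : ℝ → ℂ} {g : ℝ × ℝ × ℝ → ℂ} {C β : ℝ}

theorem norm_shearedIntegrand_le (hβ : 0 ≤ β) (hφ : ∀ ξ, ‖φ ξ‖ ≤ C * (1 + |ξ|) ^ (-β))
    {ε R : ℝ} (hε : 0 < ε) (hg : Function.support g ⊆ Metric.closedBall 0 R)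
    {v : ℝ × ℝ × ℝ} (h₁ : ε ≤ |v.1|) (h₂ : ε ≤ |v.2.1|) (h₃ : ε ≤ |v.2.2|) (p : ℝ × ℝ × ℝ × ℝ) :
    ‖shearedIntegrand φ g v p‖ ≤
      C ^ 4 * (((1 + ε + R) / ε) ^ β) ^ 3 * (1 + |p.1|) ^ (-(4 * β)) * ‖g (-p.2)‖ := by
  by_cases hp : g (-p.2) = 0
  · simp [shearedIntegrand, hp]
  have hη : ‖p.2‖ ≤ R := by
    simpa using hg (Function.mem_support.mpr hp)
  have hη₁ : |p.2.1| ≤ R := (norm_fst_le p.2).trans hη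
  have hη₂ : |p.2.2.1| ≤ R := ((norm_fst_le p.2.2).trans (norm_snd_le p.2)).trans hη
  have hη₃ : |p.2.2.2| ≤ R := ((norm_snd_le p.2.2).trans (norm_snd_le p.2)).trans hη
  have hC : 0 ≤ C := by simpa using (norm_nonneg _).trans (hφ 0)
  have hR : 0 ≤ R := (norm_nonneg _).trans hη
  have hx₄ : ((1 + |p.1|) ^ (-β)) ^ 4 = (1 + |p.1|) ^ (-(4 * β)) := by
    rw [← Real.rpow_natCast, ← Real.rpow_mul (by positivity)]
    norm_num [mul_comm]
  set x := (1 + |p.1|) ^ (-β)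
  set L := ((1 + ε + R) / ε) ^ β
  have hx : 0 ≤ x := by positivity
  have hL : 0 ≤ L := by positivity
  calc ‖shearedIntegrand φ g v p‖
      = ‖φ p.1‖ * ‖φ (p.2.1 - v.1 * p.1)‖ * ‖φ (p.2.2.1 - v.2.1 * p.1)‖ *
          ‖φ (p.2.2.2 - v.2.2 * p.1)‖ * ‖g (-p.2)‖ := by
        simp only [shearedIntegrand, norm_mul]
    _ ≤ (C * x) * (C * L * x) * (C * L * x) * (C * L * x) * ‖g (-p.2)‖ := by
        gcongr
        · exact hφ p.1
        · exact norm_comp_sub_mul_le hβ hφ hε h₁ hη₁ p.1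
        · exact norm_comp_sub_mul_le hβ hφ hε h₂ hη₂ p.1
        · exact norm_comp_sub_mul_le hβ hφ hε h₃ hη₃ p.1
    _ = C ^ 4 * L ^ 3 * (1 + |p.1|) ^ (-(4 * β)) * ‖g (-p.2)‖ := by rw [← hx₄]; ring

theorem continuousAt_integral_shearedIntegrand (hφc : Continuous φ)
    (hφ : ∀ ξ, ‖φ ξ‖ ≤ C * (1 + |ξ|) ^ (-β)) (hβ : 1 / 4 < β) (hgc : Continuous g)
    (hgs : HasCompactSupport g) {v₀ : ℝ × ℝ × ℝ} (h₁ : v₀.1 ≠ 0) (h₂ : v₀.2.1 ≠ 0)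
    (h₃ : v₀.2.2 ≠ 0) :
    ContinuousAt (fun v => ∫ p, shearedIntegrand φ g v p) v₀ := by
  obtain ⟨R, hR⟩ := hgs.isBounded.subset_closedBall 0
  obtain ⟨ε, hε, hε₁, hε₂, hε₃⟩ : ∃ ε > 0, ε < |v₀.1| ∧ ε < |v₀.2.1| ∧ ε < |v₀.2.2| := by
    have := abs_pos.2 h₁; have := abs_pos.2 h₂; have := abs_pos.2 h₃
    refine ⟨min |v₀.1| (min |v₀.2.1| |v₀.2.2|) / 2, by positivity, ?_, ?_, ?_⟩ <;>
      linarith [min_le_left |v₀.1| (min |v₀.2.1| |v₀.2.2|),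
        min_le_right |v₀.1| (min |v₀.2.1| |v₀.2.2|), min_le_left |v₀.2.1| |v₀.2.2|,
        min_le_right |v₀.2.1| |v₀.2.2|]
  have hnear : ∀ᶠ v in 𝓝 v₀, ε < |v.1| ∧ ε < |v.2.1| ∧ ε < |v.2.2| :=
    ((by fun_prop : Continuous fun v : ℝ × ℝ × ℝ => |v.1|).continuousAt.eventually_const_lt
      hε₁).and <|
    ((by fun_prop : Continuous fun v : ℝ × ℝ × ℝ => |v.2.1|).continuousAt.eventually_const_lt
      hε₂).and
    ((by fun_prop : Continuous fun v : ℝ × ℝ × ℝ => |v.2.2|).continuousAt.eventually_const_lt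
      hε₃)
  have hcont : ∀ v, Continuous (shearedIntegrand φ g v) := fun v => by
    unfold shearedIntegrand; fun_prop
  refine continuousAt_of_dominated
    (bound := fun p => C ^ 4 * (((1 + ε + R) / ε) ^ β) ^ 3 * (1 + |p.1|) ^ (-(4 * β)) * ‖g (-p.2)‖)
    (Eventually.of_forall fun v => (hcont v).aestronglyMeasurable) ?_ ?_
    (ae_of_all _ fun p => ?_)
  · filter_upwards [hnear] with v ⟨hv₁, hv₂, hv₃⟩
    exact ae_of_all _ (norm_shearedIntegrand_le (by linarith) hφ hε
      (subset_tsupport g |>.trans hR) hv₁.le hv₂.le hv₃.le)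
  · have hdecay : Integrable (fun ξ : ℝ => (1 + ‖ξ‖) ^ (-(4 * β))) :=
      integrable_one_add_norm (by simp; linarith)
    have hg' : Integrable (fun η : ℝ × ℝ × ℝ => ‖g (-η)‖) :=
      (hgc.comp continuous_neg).norm.integrable_of_hasCompactSupport
        (hgs.comp_homeomorph (Homeomorph.neg _)).norm
    exact (hdecay.const_mul _).mul_prod hg'
  · have : Continuous fun v => shearedIntegrand φ g v p := by unfold shearedIntegrand; fun_prop
    exact this.continuousAt

end Continuity

theorem stmt10_general (μ : Measure ℝ) (hprob : IsProbabilityMeasure μ)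
    (C β : ℝ) (hβ : 1 / 4 < β)
    (hdecay : ∀ ξ : ℝ, ‖ftM μ ξ‖ ≤ C * (1 + |ξ|) ^ (-β))
    (f : SchwartzMap (ℝ × ℝ × ℝ) ℂ) (hfc : HasCompactSupport (ft3 ⇑f)) :
    ContinuousOn (fun st : ℝ × ℝ =>
      ∫ p : ℝ × ℝ × ℝ × ℝ,
        ftM μ p.1 * ftM μ p.2.1 * ftM μ p.2.2.1 * ftM μ p.2.2.2 *
          ft3 ⇑f (-p.2.1 - st.1 / (1 - st.2) * p.1,
            -p.2.2.1 - (1 - st.1) / (1 - st.2) * p.1,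
            -p.2.2.2 + st.2 / (1 - st.2) * p.1))
      (Set.Ioo (0 : ℝ) 1 ×ˢ Set.Ioo (0 : ℝ) 1) := by
  set v : ℝ × ℝ → ℝ × ℝ × ℝ := fun st =>
    (st.1 / (1 - st.2), (1 - st.1) / (1 - st.2), -(st.2 / (1 - st.2)))
  refine ContinuousOn.congr (f := fun st => ∫ p, shearedIntegrand (ftM μ) (ft3 ⇑f) (v st) p)
    (fun st ⟨⟨hs₀, hs₁⟩, ⟨ht₀, ht₁⟩⟩ => ?_) fun st _ => ?_
  · have ht : 1 - st.2 ≠ 0 := by linarith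
    refine ContinuousAt.continuousWithinAt (ContinuousAt.comp (g := fun w =>
      ∫ p, shearedIntegrand (ftM μ) (ft3 ⇑f) w p) ?_ (by fun_prop))
    exact continuousAt_integral_shearedIntegrand (continuous_ftM μ) hdecay hβ
      (continuous_ft3 f.integrable) hfc (div_ne_zero (by linarith) ht)
      (div_ne_zero (by linarith) ht) (neg_ne_zero.2 (div_ne_zero (by linarith) ht))
  · simp only [integral_shearedIntegrand, v, neg_mul, sub_neg_eq_add]

/-- For a probability measure `μ` supported in `[0,1]` with `|μ̂(ξ)| ≤ C(1+|ξ|)^{-β}`,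
`β > 1/4`, and a Schwartz `f` on ℝ³ with compactly supported Fourier transform, the map
`(s,t) ↦ F^{[f]}(s,t) = ∫_{ℝ⁴} μ̂(ξ) ∏ᵢ μ̂(ηᵢ)
  f̂(−η₁ − (s/(1−t))ξ, −η₂ − ((1−s)/(1−t))ξ, −η₃ + (t/(1−t))ξ)`
is continuous on `(0,1)²`. -/
theorem stmt10 (μ : Measure ℝ) (hprob : IsProbabilityMeasure μ)
    (hμsupp : μ (Set.Icc (0 : ℝ) 1)ᶜ = 0)
    (C β : ℝ) (hβ : 1 / 4 < β)
    (hdecay : ∀ ξ : ℝ, ‖ftM μ ξ‖ ≤ C * (1 + |ξ|) ^ (-β))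
    (f : SchwartzMap (ℝ × ℝ × ℝ) ℂ) (hfc : HasCompactSupport (ft3 ⇑f)) :
    ContinuousOn (fun st : ℝ × ℝ =>
      ∫ p : ℝ × ℝ × ℝ × ℝ,
        ftM μ p.1 * ftM μ p.2.1 * ftM μ p.2.2.1 * ftM μ p.2.2.2 *
          ft3 ⇑f (-p.2.1 - st.1 / (1 - st.2) * p.1,
            -p.2.2.1 - (1 - st.1) / (1 - st.2) * p.1,
            -p.2.2.2 + st.2 / (1 - st.2) * p.1))
      (Set.Ioo (0 : ℝ) 1 ×ˢ Set.Ioo (0 : ℝ) 1) :=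
  stmt10_general μ hprob C β hβ hdecay f hfc
end

section
/- Fix t ∈ (0, 1/2), β with 1/4 < β ≤ 1/2, and C < ∞. Define for s ∈ (0,1) the quantity C'(s,t) = C⁴ ∫_ℝ (1+|ξ|)^{-β} (1+(s/(1−t))|ξ|)^{-β} (1+((1−s)/(1−t))|ξ|)^{-β} (1+(t/(1−t))|ξ|)^{-β} dξ. Then ∫₀¹ C'(s,t) ds < ∞. -/
set_option maxHeartbeats 1000000

open MeasureTheory

private lemma key_bound {β a b x : ℝ} (hβ : 0 < β) (ha : 0 < a) (ha1 : a ≤ 1)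
    (hab : a ≤ b) (hx : 0 ≤ x) :
    (1 + b * x) ^ (-β) ≤ a ^ (-β) * (1 + x) ^ (-β) := by
  have h2 : 0 < a * (1 + x) := by positivity
  have h1 : a * (1 + x) ≤ 1 + b * x := by nlinarith
  calc (1 + b * x) ^ (-β) ≤ (a * (1 + x)) ^ (-β) :=
        Real.rpow_le_rpow_of_nonpos h2 h1 (by linarith)
    _ = a ^ (-β) * (1 + x) ^ (-β) := Real.mul_rpow ha.le (by linarith)

private lemma prod_bound {t β s : ℝ} (ξ : ℝ) (ht0 : 0 < t) (ht1 : t < 1 / 2)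
    (hs0 : 0 < s) (hs1 : s < 1) (hβ : 0 < β) :
    (1 + |ξ|) ^ (-β) * (1 + s / (1 - t) * |ξ|) ^ (-β) *
      (1 + (1 - s) / (1 - t) * |ξ|) ^ (-β) * (1 + t / (1 - t) * |ξ|) ^ (-β) ≤
    t ^ (-β) * (s ^ (-β) * (1 - s) ^ (-β)) * (1 + |ξ|) ^ (-(4 * β)) := by
  set x := |ξ| with hxdef
  have hx : 0 ≤ x := abs_nonneg ξ
  have h1t : 0 < 1 - t := by linarith
  have h1t1 : 1 - t ≤ 1 := by linarith
  have hA : (1 + s / (1 - t) * x) ^ (-β) ≤ s ^ (-β) * (1 + x) ^ (-β) :=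
    key_bound hβ hs0 hs1.le (by rw [le_div_iff₀ h1t]; nlinarith) hx
  have hB : (1 + (1 - s) / (1 - t) * x) ^ (-β) ≤ (1 - s) ^ (-β) * (1 + x) ^ (-β) :=
    key_bound hβ (by linarith) (by linarith) (by rw [le_div_iff₀ h1t]; nlinarith) hx
  have hC : (1 + t / (1 - t) * x) ^ (-β) ≤ t ^ (-β) * (1 + x) ^ (-β) :=
    key_bound hβ ht0 (by linarith) (by rw [le_div_iff₀ h1t]; nlinarith) hx
  have hp : (1 + x) ^ (-(4 * β)) =
      (1 + x) ^ (-β) * (1 + x) ^ (-β) * ((1 + x) ^ (-β) * (1 + x) ^ (-β)) := by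
    rw [show -(4 * β) = -β + -β + (-β + -β) by ring, Real.rpow_add (by positivity),
      Real.rpow_add (by positivity)]
  have n0 : (0:ℝ) ≤ (1 + x) ^ (-β) := Real.rpow_nonneg (by linarith) _
  have nsx : (0:ℝ) ≤ s / (1 - t) * x := mul_nonneg (div_nonneg hs0.le h1t.le) hx
  have nsx' : (0:ℝ) ≤ (1 - s) / (1 - t) * x :=
    mul_nonneg (div_nonneg (by linarith) h1t.le) hx
  have ntx : (0:ℝ) ≤ t / (1 - t) * x := mul_nonneg (div_nonneg ht0.le h1t.le) hx
  have nA : (0:ℝ) ≤ (1 + s / (1 - t) * x) ^ (-β) := Real.rpow_nonneg (by linarith) _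
  have nB : (0:ℝ) ≤ (1 + (1 - s) / (1 - t) * x) ^ (-β) := Real.rpow_nonneg (by linarith) _
  have nC : (0:ℝ) ≤ (1 + t / (1 - t) * x) ^ (-β) := Real.rpow_nonneg (by linarith) _
  have n1 : (0:ℝ) ≤ s ^ (-β) * (1 + x) ^ (-β) :=
    mul_nonneg (Real.rpow_nonneg hs0.le _) n0
  have n2 : (0:ℝ) ≤ (1 - s) ^ (-β) * (1 + x) ^ (-β) :=
    mul_nonneg (Real.rpow_nonneg (by linarith) _) n0
  have n3 : (0:ℝ) ≤ t ^ (-β) * (1 + x) ^ (-β) :=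
    mul_nonneg (Real.rpow_nonneg ht0.le _) n0
  calc (1 + x) ^ (-β) * (1 + s / (1 - t) * x) ^ (-β) *
        (1 + (1 - s) / (1 - t) * x) ^ (-β) * (1 + t / (1 - t) * x) ^ (-β)
      ≤ (1 + x) ^ (-β) * (s ^ (-β) * (1 + x) ^ (-β)) *
        ((1 - s) ^ (-β) * (1 + x) ^ (-β)) * (t ^ (-β) * (1 + x) ^ (-β)) :=
        mul_le_mul
          (mul_le_mul (mul_le_mul_of_nonneg_left hA n0) hB nB
            (mul_nonneg n0 n1))
          hC nC (mul_nonneg (mul_nonneg n0 n1) n2)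
    _ = t ^ (-β) * (s ^ (-β) * (1 - s) ^ (-β)) * (1 + x) ^ (-(4 * β)) := by
        rw [hp]; ring

private lemma half_rpow_le {β : ℝ} (hβ0 : 0 < β) (hβ2 : β ≤ 1 / 2) :
    (1 / 2 : ℝ) ^ (-β) ≤ 2 := by
  have h : (1 / 2 : ℝ) ^ (-β) = 2 ^ β := by
    rw [show (1 / 2 : ℝ) = 2 ^ (-1 : ℝ) by norm_num [Real.rpow_neg_one],
      ← Real.rpow_mul (by norm_num)]
    norm_num
  rw [h]
  calc (2 : ℝ) ^ β ≤ 2 ^ (1 : ℝ) :=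
      Real.rpow_le_rpow_of_exponent_le (by norm_num) (by linarith)
    _ = 2 := Real.rpow_one 2

/-- For fixed `t ∈ (0,1/2)`, `1/4 < β ≤ 1/2` and a constant `C`, the integral
`∫₀¹ C'(s,t) ds` is finite, where
`C'(s,t) = C⁴ ∫_ℝ (1+|ξ|)^{-β}(1+(s/(1−t))|ξ|)^{-β}(1+((1−s)/(1−t))|ξ|)^{-β}(1+(t/(1−t))|ξ|)^{-β} dξ`. -/
theorem stmt11 (t β C : ℝ) (ht : t ∈ Set.Ioo (0 : ℝ) (1 / 2))
    (hβ1 : 1 / 4 < β) (hβ2 : β ≤ 1 / 2) :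
    (∫⁻ s in Set.Ioo (0 : ℝ) 1,
      ENNReal.ofReal (C ^ 4) *
        ∫⁻ ξ : ℝ, ENNReal.ofReal
          ((1 + |ξ|) ^ (-β) * (1 + s / (1 - t) * |ξ|) ^ (-β) *
            (1 + (1 - s) / (1 - t) * |ξ|) ^ (-β) * (1 + t / (1 - t) * |ξ|) ^ (-β))) < ⊤ := by
  obtain ⟨ht0, ht1⟩ := ht
  have hβ0 : 0 < β := by linarith
  set I : ENNReal := ∫⁻ ξ : ℝ, ENNReal.ofReal ((1 + |ξ|) ^ (-(4 * β))) with hIdef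
  have hI : I < ⊤ := by
    have := finite_integral_one_add_norm (E := ℝ) (μ := volume) (r := 4 * β)
      (by simp; linarith)
    simpa [Real.norm_eq_abs] using this
  -- inner integral bound
  have inner_le : ∀ s ∈ Set.Ioo (0 : ℝ) 1,
      (∫⁻ ξ : ℝ, ENNReal.ofReal
        ((1 + |ξ|) ^ (-β) * (1 + s / (1 - t) * |ξ|) ^ (-β) *
          (1 + (1 - s) / (1 - t) * |ξ|) ^ (-β) * (1 + t / (1 - t) * |ξ|) ^ (-β))) ≤
      ENNReal.ofReal (t ^ (-β)) * ENNReal.ofReal (s ^ (-β) * (1 - s) ^ (-β)) * I := by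
    intro s hs
    have hmono : (∫⁻ ξ : ℝ, ENNReal.ofReal
        ((1 + |ξ|) ^ (-β) * (1 + s / (1 - t) * |ξ|) ^ (-β) *
          (1 + (1 - s) / (1 - t) * |ξ|) ^ (-β) * (1 + t / (1 - t) * |ξ|) ^ (-β))) ≤
        ∫⁻ ξ : ℝ, ENNReal.ofReal (t ^ (-β) * (s ^ (-β) * (1 - s) ^ (-β))) *
          ENNReal.ofReal ((1 + |ξ|) ^ (-(4 * β))) := by
      refine lintegral_mono fun ξ => ?_
      rw [← ENNReal.ofReal_mul (mul_nonneg (Real.rpow_nonneg ht0.le _)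
        (mul_nonneg (Real.rpow_nonneg hs.1.le _)
          (Real.rpow_nonneg (by linarith [hs.2]) _)))]
      exact ENNReal.ofReal_le_ofReal (prod_bound ξ ht0 ht1 hs.1 hs.2 hβ0)
    rw [lintegral_const_mul' _ _ ENNReal.ofReal_ne_top,
      ENNReal.ofReal_mul (Real.rpow_nonneg ht0.le _)] at hmono
    exact hmono
  -- constant
  set K : ENNReal := ENNReal.ofReal (C ^ 4) * ENNReal.ofReal (t ^ (-β)) * I with hKdef
  have hmain : (∫⁻ s in Set.Ioo (0 : ℝ) 1,
      ENNReal.ofReal (C ^ 4) *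
        ∫⁻ ξ : ℝ, ENNReal.ofReal
          ((1 + |ξ|) ^ (-β) * (1 + s / (1 - t) * |ξ|) ^ (-β) *
            (1 + (1 - s) / (1 - t) * |ξ|) ^ (-β) * (1 + t / (1 - t) * |ξ|) ^ (-β))) ≤
      K * ∫⁻ s in Set.Ioo (0 : ℝ) 1, ENNReal.ofReal (s ^ (-β) * (1 - s) ^ (-β)) := by
    rw [← lintegral_const_mul' _ _ (by finiteness : K ≠ ⊤)]
    refine setLIntegral_mono' measurableSet_Ioo fun s hs => ?_
    calc ENNReal.ofReal (C ^ 4) * _ ≤ ENNReal.ofReal (C ^ 4) *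
          (ENNReal.ofReal (t ^ (-β)) * ENNReal.ofReal (s ^ (-β) * (1 - s) ^ (-β)) * I) :=
        mul_le_mul_right (inner_le s hs) _
      _ = K * ENNReal.ofReal (s ^ (-β) * (1 - s) ^ (-β)) := by
        rw [hKdef]; ring
  refine lt_of_le_of_lt hmain ?_
  have hKne : K ≠ ⊤ := by finiteness
  refine ENNReal.mul_lt_top hKne.lt_top ?_
  -- finiteness of the beta-type integral
  have hptw : ∀ s ∈ Set.Ioo (0 : ℝ) 1,
      ENNReal.ofReal (s ^ (-β) * (1 - s) ^ (-β)) ≤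
      ENNReal.ofReal (2 * s ^ (-β)) + ENNReal.ofReal (2 * (1 - s) ^ (-β)) := by
    intro s hs
    obtain ⟨hs0, hs1⟩ := hs
    have h1s : 0 < 1 - s := by linarith
    rcases le_or_gt s (1 / 2) with h | h
    · refine le_trans (ENNReal.ofReal_le_ofReal ?_) le_self_add
      have : (1 - s) ^ (-β) ≤ 2 := by
        calc (1 - s) ^ (-β) ≤ (1 / 2 : ℝ) ^ (-β) :=
            Real.rpow_le_rpow_of_nonpos (by norm_num) (by linarith) (by linarith)
          _ ≤ 2 := half_rpow_le hβ0 hβ2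
      nlinarith [Real.rpow_nonneg hs0.le (-β), Real.rpow_nonneg h1s.le (-β)]
    · refine le_trans (ENNReal.ofReal_le_ofReal ?_) le_add_self
      have : s ^ (-β) ≤ 2 := by
        calc s ^ (-β) ≤ (1 / 2 : ℝ) ^ (-β) :=
            Real.rpow_le_rpow_of_nonpos (by norm_num) (by linarith) (by linarith)
          _ ≤ 2 := half_rpow_le hβ0 hβ2
      nlinarith [Real.rpow_nonneg hs0.le (-β), Real.rpow_nonneg h1s.le (-β)]
  have hint1 : IntegrableOn (fun s : ℝ => 2 * s ^ (-β)) (Set.Ioo (0 : ℝ) 1) := by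
    have h : IntervalIntegrable (fun x : ℝ => x ^ (-β)) volume 0 1 :=
      intervalIntegral.intervalIntegrable_rpow' (by linarith)
    have h2 := (intervalIntegrable_iff_integrableOn_Ioc_of_le (by norm_num : (0:ℝ) ≤ 1)).mp h
    exact (h2.mono_set Set.Ioo_subset_Ioc_self).const_mul 2
  have hint2 : IntegrableOn (fun s : ℝ => 2 * (1 - s) ^ (-β)) (Set.Ioo (0 : ℝ) 1) := by
    have h : IntervalIntegrable (fun x : ℝ => x ^ (-β)) volume 0 1 :=
      intervalIntegral.intervalIntegrable_rpow' (by linarith)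
    have h' := h.comp_sub_left 1
    simp only [sub_self, sub_zero] at h'
    have h2 : IntegrableOn (fun x : ℝ => (1 - x) ^ (-β)) (Set.Ioc 0 1) volume :=
      (intervalIntegrable_iff_integrableOn_Ioc_of_le (by norm_num : (0:ℝ) ≤ 1)).mp h'.symm
    exact (h2.mono_set Set.Ioo_subset_Ioc_self).const_mul 2
  calc (∫⁻ s in Set.Ioo (0 : ℝ) 1, ENNReal.ofReal (s ^ (-β) * (1 - s) ^ (-β)))
      ≤ ∫⁻ s in Set.Ioo (0 : ℝ) 1,
          (ENNReal.ofReal (2 * s ^ (-β)) + ENNReal.ofReal (2 * (1 - s) ^ (-β))) :=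
        setLIntegral_mono' measurableSet_Ioo hptw
    _ = (∫⁻ s in Set.Ioo (0 : ℝ) 1, ENNReal.ofReal (2 * s ^ (-β))) +
        ∫⁻ s in Set.Ioo (0 : ℝ) 1, ENNReal.ofReal (2 * (1 - s) ^ (-β)) := by
        refine lintegral_add_left' ?_ _
        exact (Measurable.ennreal_ofReal (by fun_prop)).aemeasurable
    _ < ⊤ := ENNReal.add_lt_top.mpr ⟨hint1.setLIntegral_lt_top, hint2.setLIntegral_lt_top⟩
end

section
/- Fix t ∈ (0, 1/2) and β with 1/4 < β ≤ 1/2. Then ∫_{s=0}^{1/2} ∫_{ξ = (1−t)/(1−s)}^{(1−t)/s} (1+|ξ|)^{-β} (1+(s/(1−t))|ξ|)^{-β} (1+((1−s)/(1−t))|ξ|)^{-β} (1+(t/(1−t))|ξ|)^{-β} dξ ds < ∞. -/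
open MeasureTheory ENNReal

private lemma aux_factor {β c x : ℝ} (hβ : 0 ≤ β) (hc : 0 < c) (hx : 0 < x) :
    (1 + c * x) ^ (-β) ≤ c ^ (-β) * x ^ (-β) := by
  have h1 : (1 + c * x) ^ (-β) ≤ (c * x) ^ (-β) :=
    Real.rpow_le_rpow_of_nonpos (by positivity) (by linarith) (by linarith)
  calc (1 + c * x) ^ (-β) ≤ (c * x) ^ (-β) := h1
    _ = c ^ (-β) * x ^ (-β) := Real.mul_rpow hc.le hx.le

/-- For fixed `t ∈ (0,1/2)` and `1/4 < β ≤ 1/2`, the integral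
`∫_{s=0}^{1/2} ∫_{ξ=(1−t)/(1−s)}^{(1−t)/s}
  (1+|ξ|)^{-β}(1+(s/(1−t))|ξ|)^{-β}(1+((1−s)/(1−t))|ξ|)^{-β}(1+(t/(1−t))|ξ|)^{-β} dξ ds`
is finite. -/
theorem stmt12 (t β : ℝ) (ht : t ∈ Set.Ioo (0 : ℝ) (1 / 2))
    (hβ1 : 1 / 4 < β) (hβ2 : β ≤ 1 / 2) :
    (∫⁻ s in Set.Ioo (0 : ℝ) (1 / 2),
      ∫⁻ ξ in Set.Ico ((1 - t) / (1 - s)) ((1 - t) / s), ENNReal.ofReal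
        ((1 + |ξ|) ^ (-β) * (1 + s / (1 - t) * |ξ|) ^ (-β) *
          (1 + (1 - s) / (1 - t) * |ξ|) ^ (-β) * (1 + t / (1 - t) * |ξ|) ^ (-β))) < ⊤ := by
  obtain ⟨ht0, ht2⟩ := ht
  have hβ0 : (0:ℝ) < β := by linarith
  have h1t : (0:ℝ) < 1 - t := by linarith
  set C : ℝ := (1 - t) ^ β * ((1/2) / (1 - t)) ^ (-β) * (t / (1 - t)) ^ (-β) with hC
  have hCpos : 0 < C := by
    apply _root_.mul_pos; apply _root_.mul_pos
    · positivity
    · apply Real.rpow_pos_of_pos; positivity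
    · apply Real.rpow_pos_of_pos; positivity
  -- the ξ-tail integral
  set K : ℝ≥0∞ := ∫⁻ ξ in Set.Ioi (1 - t), ENNReal.ofReal (ξ ^ (-(4*β))) with hK
  have hKlt : K < ⊤ := by
    have hint : IntegrableOn (fun x : ℝ => x ^ (-(4*β))) (Set.Ioi (1 - t)) :=
      integrableOn_Ioi_rpow_of_lt (by linarith) h1t
    exact hint.lintegral_lt_top
  -- pointwise bound on the inner integral
  have inner_bound : ∀ s ∈ Set.Ioo (0:ℝ) (1/2),
      (∫⁻ ξ in Set.Ico ((1 - t) / (1 - s)) ((1 - t) / s), ENNReal.ofReal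
        ((1 + |ξ|) ^ (-β) * (1 + s / (1 - t) * |ξ|) ^ (-β) *
          (1 + (1 - s) / (1 - t) * |ξ|) ^ (-β) * (1 + t / (1 - t) * |ξ|) ^ (-β)))
        ≤ ENNReal.ofReal (C * s ^ (-β)) * K := by
    intro s hs
    obtain ⟨hs0, hs2⟩ := hs
    have h1s : (0:ℝ) < 1 - s := by linarith
    have hsub : Set.Ico ((1 - t) / (1 - s)) ((1 - t) / s) ⊆ Set.Ioi (1 - t) := by
      intro ξ hξ
      have : 1 - t < (1 - t) / (1 - s) := by
        rw [lt_div_iff₀ h1s]; nlinarith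
      exact lt_of_lt_of_le this hξ.1
    calc (∫⁻ ξ in Set.Ico ((1 - t) / (1 - s)) ((1 - t) / s), ENNReal.ofReal
          ((1 + |ξ|) ^ (-β) * (1 + s / (1 - t) * |ξ|) ^ (-β) *
            (1 + (1 - s) / (1 - t) * |ξ|) ^ (-β) * (1 + t / (1 - t) * |ξ|) ^ (-β)))
        ≤ ∫⁻ ξ in Set.Ico ((1 - t) / (1 - s)) ((1 - t) / s),
            ENNReal.ofReal (C * s ^ (-β) * ξ ^ (-(4*β))) := by
          apply setLIntegral_mono
          · fun_prop
          · intro ξ hξ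
            apply ENNReal.ofReal_le_ofReal
            have hξpos : 0 < ξ := lt_trans h1t (hsub hξ)
            rw [abs_of_pos hξpos]
            have f1 : (1 + ξ) ^ (-β) ≤ ξ ^ (-β) :=
              Real.rpow_le_rpow_of_nonpos hξpos (by linarith) (by linarith)
            have f2 : (1 + s / (1 - t) * ξ) ^ (-β) ≤ (s / (1 - t)) ^ (-β) * ξ ^ (-β) :=
              aux_factor hβ0.le (by positivity) hξpos
            have f3 : (1 + (1 - s) / (1 - t) * ξ) ^ (-β)
                ≤ ((1/2) / (1 - t)) ^ (-β) * ξ ^ (-β) := by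
              refine le_trans (aux_factor hβ0.le (by positivity) hξpos) ?_
              have : ((1 - s) / (1 - t)) ^ (-β) ≤ ((1/2) / (1 - t)) ^ (-β) := by
                apply Real.rpow_le_rpow_of_nonpos (by positivity) ?_ (by linarith)
                gcongr <;> linarith
              exact mul_le_mul_of_nonneg_right this (by positivity)
            have f4 : (1 + t / (1 - t) * ξ) ^ (-β) ≤ (t / (1 - t)) ^ (-β) * ξ ^ (-β) :=
              aux_factor hβ0.le (by positivity) hξpos
            have prod_le : (1 + ξ) ^ (-β) * (1 + s / (1 - t) * ξ) ^ (-β) *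
                (1 + (1 - s) / (1 - t) * ξ) ^ (-β) * (1 + t / (1 - t) * ξ) ^ (-β)
                ≤ (ξ ^ (-β)) * ((s / (1 - t)) ^ (-β) * ξ ^ (-β)) *
                  (((1/2) / (1 - t)) ^ (-β) * ξ ^ (-β)) * ((t / (1 - t)) ^ (-β) * ξ ^ (-β)) := by
              gcongr <;> positivity
            refine le_trans prod_le (le_of_eq ?_)
            have hx4 : ξ ^ (-β) * ξ ^ (-β) * ξ ^ (-β) * ξ ^ (-β) = ξ ^ (-(4*β)) := by
              rw [← Real.rpow_add hξpos, ← Real.rpow_add hξpos, ← Real.rpow_add hξpos]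
              congr 1; ring
            have hsd : (s / (1 - t)) ^ (-β) = s ^ (-β) * (1 - t) ^ β := by
              rw [Real.div_rpow hs0.le h1t.le, Real.rpow_neg h1t.le,
                div_eq_mul_inv, inv_inv]
            rw [hsd, ← hx4, hC]; ring
      _ ≤ ∫⁻ ξ in Set.Ioi (1 - t), ENNReal.ofReal (C * s ^ (-β) * ξ ^ (-(4*β))) :=
          lintegral_mono_set hsub
      _ = ENNReal.ofReal (C * s ^ (-β)) * K := by
          rw [hK, ← lintegral_const_mul' _ _ ENNReal.ofReal_ne_top]
          congr 1; ext ξ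
          rw [← ENNReal.ofReal_mul (by positivity)]
  calc (∫⁻ s in Set.Ioo (0 : ℝ) (1 / 2),
      ∫⁻ ξ in Set.Ico ((1 - t) / (1 - s)) ((1 - t) / s), ENNReal.ofReal
        ((1 + |ξ|) ^ (-β) * (1 + s / (1 - t) * |ξ|) ^ (-β) *
          (1 + (1 - s) / (1 - t) * |ξ|) ^ (-β) * (1 + t / (1 - t) * |ξ|) ^ (-β)))
      ≤ ∫⁻ s in Set.Ioo (0 : ℝ) (1 / 2), ENNReal.ofReal (C * s ^ (-β)) * K := by
        apply setLIntegral_mono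
        · fun_prop
        · exact inner_bound
    _ = (∫⁻ s in Set.Ioo (0 : ℝ) (1 / 2), ENNReal.ofReal (C * s ^ (-β))) * K :=
        lintegral_mul_const' _ _ hKlt.ne
    _ < ⊤ := by
        apply ENNReal.mul_lt_top _ hKlt
        have hint : IntegrableOn (fun x : ℝ => C * x ^ (-β)) (Set.Ioo (0:ℝ) (1/2)) := by
          have h1 : IntervalIntegrable (fun x : ℝ => x ^ (-β)) volume 0 (1/2) :=
            intervalIntegral.intervalIntegrable_rpow' (by linarith)
          have h2 : IntegrableOn (fun x : ℝ => x ^ (-β)) (Set.Ioc (0:ℝ) (1/2)) := by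
            simpa [intervalIntegrable_iff, Set.uIoc_of_le] using h1
          exact (h2.mono_set Set.Ioo_subset_Ioc_self).const_mul C
        exact hint.lintegral_lt_top
end

section
/- Fix t ∈ (0, 1/2) and β with 1/4 < β ≤ 1/2. Then ∫_{s=0}^{1/2} ∫_{ξ = (1−t)/s}^{∞} (1+|ξ|)^{-β} (1+(s/(1−t))|ξ|)^{-β} (1+((1−s)/(1−t))|ξ|)^{-β} (1+(t/(1−t))|ξ|)^{-β} dξ ds < ∞. -/
open MeasureTheory

set_option maxHeartbeats 1000000 in
/-- For fixed `t ∈ (0,1/2)` and `1/4 < β ≤ 1/2`, the integral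
`∫_{s=0}^{1/2} ∫_{ξ=(1−t)/s}^{∞}
  (1+|ξ|)^{-β}(1+(s/(1−t))|ξ|)^{-β}(1+((1−s)/(1−t))|ξ|)^{-β}(1+(t/(1−t))|ξ|)^{-β} dξ ds`
is finite. -/
theorem stmt13 (t β : ℝ) (ht : t ∈ Set.Ioo (0 : ℝ) (1 / 2))
    (hβ1 : 1 / 4 < β) (hβ2 : β ≤ 1 / 2) :
    (∫⁻ s in Set.Ioo (0 : ℝ) (1 / 2),
      ∫⁻ ξ in Set.Ici ((1 - t) / s), ENNReal.ofReal
        ((1 + |ξ|) ^ (-β) * (1 + s / (1 - t) * |ξ|) ^ (-β) *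
          (1 + (1 - s) / (1 - t) * |ξ|) ^ (-β) * (1 + t / (1 - t) * |ξ|) ^ (-β))) < ⊤ := by
  obtain ⟨ht0, ht2⟩ := ht
  have h1t : (0:ℝ) < 1 - t := by linarith
  have hβ0 : (0:ℝ) < β := by linarith
  have h4β : (-(4*β) : ℝ) < -1 := by linarith
  set D : ℝ := (1 - t) ^ β * (2 * (1 - t)) ^ β * (t / (1 - t)) ^ (-β) with hD
  have hD0 : 0 < D := by
    apply mul_pos (mul_pos _ _) _ <;>
      exact Real.rpow_pos_of_pos (by positivity) _
  set E : ℝ := D * ((1 - t) ^ (1 - 4*β) / (4*β - 1)) with hEdef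
  have hE0 : 0 < E := by
    apply mul_pos hD0
    apply div_pos (Real.rpow_pos_of_pos h1t _) (by linarith)
  have key : ∀ s ∈ Set.Ioo (0:ℝ) (1/2),
      (∫⁻ ξ in Set.Ici ((1 - t) / s), ENNReal.ofReal
        ((1 + |ξ|) ^ (-β) * (1 + s / (1 - t) * |ξ|) ^ (-β) *
          (1 + (1 - s) / (1 - t) * |ξ|) ^ (-β) * (1 + t / (1 - t) * |ξ|) ^ (-β)))
        ≤ ENNReal.ofReal (E * s ^ (3*β - 1)) := by
    intro s hs
    obtain ⟨hs0, hs2⟩ := hs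
    set a : ℝ := (1 - t) / s with ha_def
    have ha0 : 0 < a := div_pos h1t hs0
    set C : ℝ := D * s ^ (-β) with hC
    have hC0 : 0 < C := mul_pos hD0 (Real.rpow_pos_of_pos hs0 _)
    -- pointwise bound on Ici a
    have hpt : ∀ ξ ∈ Set.Ici a,
        (1 + |ξ|) ^ (-β) * (1 + s / (1 - t) * |ξ|) ^ (-β) *
          (1 + (1 - s) / (1 - t) * |ξ|) ^ (-β) * (1 + t / (1 - t) * |ξ|) ^ (-β)
        ≤ C * ξ ^ (-(4*β)) := by
      intro ξ hξ
      have hξ0 : 0 < ξ := lt_of_lt_of_le ha0 hξ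
      have hsx : 0 < s / (1 - t) * ξ := mul_pos (div_pos hs0 h1t) hξ0
      have h1sx : 0 < (1 - s) / (1 - t) * ξ :=
        mul_pos (div_pos (by linarith) h1t) hξ0
      have htx : 0 < t / (1 - t) * ξ := mul_pos (div_pos ht0 h1t) hξ0
      have habs : |ξ| = ξ := abs_of_pos hξ0
      rw [habs]
      have h1 : (1 + ξ) ^ (-β) ≤ ξ ^ (-β) :=
        Real.rpow_le_rpow_of_nonpos hξ0 (by linarith) (by linarith)
      have h2 : (1 + s / (1 - t) * ξ) ^ (-β) ≤ (s / (1 - t)) ^ (-β) * ξ ^ (-β) := by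
        rw [← Real.mul_rpow (by positivity) hξ0.le]
        exact Real.rpow_le_rpow_of_nonpos (by positivity) (by linarith) (by linarith)
      have h3 : (1 + (1 - s) / (1 - t) * ξ) ^ (-β) ≤ (2 * (1 - t)) ^ β * ξ ^ (-β) := by
        have hb : (1 / (2 * (1 - t))) ^ (-β) = (2 * (1 - t)) ^ β := by
          rw [one_div, Real.inv_rpow (by positivity), Real.rpow_neg (by positivity), inv_inv]
        rw [← hb, ← Real.mul_rpow (by positivity) hξ0.le]
        apply Real.rpow_le_rpow_of_nonpos (by positivity) _ (by linarith)
        have : 1 / (2 * (1 - t)) * ξ ≤ (1 - s) / (1 - t) * ξ := by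
          apply mul_le_mul_of_nonneg_right _ hξ0.le
          rw [div_le_div_iff₀ (by positivity) h1t]
          ring_nf
          nlinarith
        linarith
      have h4 : (1 + t / (1 - t) * ξ) ^ (-β) ≤ (t / (1 - t)) ^ (-β) * ξ ^ (-β) := by
        rw [← Real.mul_rpow (by positivity) hξ0.le]
        exact Real.rpow_le_rpow_of_nonpos (by positivity) (by linarith) (by linarith)
      have hsplit : C * ξ ^ (-(4*β)) =
          ξ ^ (-β) * ((s / (1 - t)) ^ (-β) * ξ ^ (-β)) *
            ((2 * (1 - t)) ^ β * ξ ^ (-β)) * ((t / (1 - t)) ^ (-β) * ξ ^ (-β)) := by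
        have hx : ξ ^ (-(4*β)) = ξ ^ (-β) * ξ ^ (-β) * ξ ^ (-β) * ξ ^ (-β) := by
          rw [← Real.rpow_add hξ0, ← Real.rpow_add hξ0, ← Real.rpow_add hξ0]
          ring_nf
        have hsd : (s / (1 - t)) ^ (-β) = s ^ (-β) * (1 - t) ^ β := by
          rw [Real.div_rpow hs0.le h1t.le, Real.rpow_neg h1t.le, div_eq_mul_inv, inv_inv]
        rw [hx, hsd, hC, hD]
        ring
      rw [hsplit]
      have n1 : (0:ℝ) ≤ ξ ^ (-β) := Real.rpow_nonneg hξ0.le _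
      have n2 : (0:ℝ) ≤ (1 + s / (1 - t) * ξ) ^ (-β) :=
        Real.rpow_nonneg (by linarith) _
      have n3 : (0:ℝ) ≤ (1 + (1 - s) / (1 - t) * ξ) ^ (-β) :=
        Real.rpow_nonneg (by linarith) _
      have n4 : (0:ℝ) ≤ (1 + t / (1 - t) * ξ) ^ (-β) :=
        Real.rpow_nonneg (by linarith) _
      have rn2 : (0:ℝ) ≤ (s / (1 - t)) ^ (-β) * ξ ^ (-β) :=
        mul_nonneg (Real.rpow_nonneg (div_nonneg hs0.le h1t.le) _) n1
      have rn3 : (0:ℝ) ≤ (2 * (1 - t)) ^ β * ξ ^ (-β) :=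
        mul_nonneg (Real.rpow_nonneg (by linarith) _) n1
      exact mul_le_mul (mul_le_mul (mul_le_mul h1 h2 n2 n1) h3 n3
        (mul_nonneg n1 rn2)) h4 n4 (mul_nonneg (mul_nonneg n1 rn2) rn3)
    have hint : IntegrableOn (fun ξ : ℝ => C * ξ ^ (-(4*β))) (Set.Ioi a) :=
      (integrableOn_Ioi_rpow_of_lt h4β ha0).const_mul C
    calc (∫⁻ ξ in Set.Ici a, ENNReal.ofReal
            ((1 + |ξ|) ^ (-β) * (1 + s / (1 - t) * |ξ|) ^ (-β) *
              (1 + (1 - s) / (1 - t) * |ξ|) ^ (-β) * (1 + t / (1 - t) * |ξ|) ^ (-β)))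
        ≤ ∫⁻ ξ in Set.Ici a, ENNReal.ofReal (C * ξ ^ (-(4*β))) := by
          apply setLIntegral_mono
            (by fun_prop : Measurable fun ξ : ℝ => ENNReal.ofReal (C * ξ ^ (-(4*β))))
          intro ξ hξ
          exact ENNReal.ofReal_le_ofReal (hpt ξ hξ)
      _ = ∫⁻ ξ in Set.Ioi a, ENNReal.ofReal (C * ξ ^ (-(4*β))) :=
          (setLIntegral_congr Ioi_ae_eq_Ici).symm
      _ = ENNReal.ofReal (∫ ξ in Set.Ioi a, C * ξ ^ (-(4*β))) := by
          rw [ofReal_integral_eq_lintegral_ofReal hint]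
          filter_upwards [ae_restrict_mem measurableSet_Ioi] with ξ hξ
          have : (0:ℝ) < ξ := lt_trans ha0 hξ
          positivity
      _ ≤ ENNReal.ofReal (E * s ^ (3*β - 1)) := by
          apply ENNReal.ofReal_le_ofReal
          rw [MeasureTheory.integral_const_mul, integral_Ioi_rpow_of_lt h4β ha0]
          have haid : a ^ (-(4*β) + 1) = (1 - t) ^ (1 - 4*β) * s ^ (4*β - 1) := by
            rw [ha_def, show (-(4*β) + 1 : ℝ) = 1 - 4*β by ring,
              Real.div_rpow h1t.le hs0.le, div_eq_mul_inv, ← Real.rpow_neg hs0.le,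
              show (-(1 - 4*β) : ℝ) = 4*β - 1 by ring]
          rw [haid, hC, hEdef]
          have hs31 : s ^ (-β) * s ^ (4*β - 1) = s ^ (3*β - 1) := by
            rw [← Real.rpow_add hs0]; ring_nf
          have h41 : (0:ℝ) < 4*β - 1 := by linarith
          rw [show (-(4*β) + 1 : ℝ) = -(4*β - 1) by ring, neg_div_neg_eq]
          calc D * s ^ (-β) * ((1 - t) ^ (1 - 4*β) * s ^ (4*β - 1) / (4*β - 1))
              = D * ((1 - t) ^ (1 - 4*β) / (4*β - 1)) * (s ^ (-β) * s ^ (4*β - 1)) := by ring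
            _ = D * ((1 - t) ^ (1 - 4*β) / (4*β - 1)) * s ^ (3*β - 1) := by rw [hs31]
            _ ≤ D * ((1 - t) ^ (1 - 4*β) / (4*β - 1)) * s ^ (3*β - 1) := le_refl _
  calc (∫⁻ s in Set.Ioo (0 : ℝ) (1 / 2),
      ∫⁻ ξ in Set.Ici ((1 - t) / s), ENNReal.ofReal
        ((1 + |ξ|) ^ (-β) * (1 + s / (1 - t) * |ξ|) ^ (-β) *
          (1 + (1 - s) / (1 - t) * |ξ|) ^ (-β) * (1 + t / (1 - t) * |ξ|) ^ (-β)))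
      ≤ ∫⁻ s in Set.Ioo (0 : ℝ) (1 / 2), ENNReal.ofReal (E * s ^ (3*β - 1)) := by
        apply setLIntegral_mono
          (by fun_prop : Measurable fun s : ℝ => ENNReal.ofReal (E * s ^ (3*β - 1))) key
    _ < ⊤ := by
        apply Integrable.lintegral_lt_top
        have h31 : (-1:ℝ) < 3*β - 1 := by linarith
        have : IntervalIntegrable (fun s : ℝ => s ^ (3*β - 1)) volume 0 (1/2) :=
          intervalIntegral.intervalIntegrable_rpow' h31
        have h2 : IntegrableOn (fun s : ℝ => s ^ (3*β - 1)) (Set.Ioc (0:ℝ) (1/2)) := by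
          rw [intervalIntegrable_iff_integrableOn_Ioc_of_le (by norm_num)] at this
          exact this
        exact ((h2.mono_set Set.Ioo_subset_Ioc_self).const_mul E)
end

section
/- Fix positive integers a, b, c, d with a + b = c + d =: S. There is a threshold N₀ (depending only on a, b, c, d) with the following property: let N ≥ N₀, let M = ⌈N/(S² + abcd)⌉, and let V ⊆ {0, 1, …, M−1} be a set such that every (x, y, u, v) ∈ V⁴ with a·x + b·y = c·u + d·v has x = y = u = v. Set U = (S+1)·V = {(S+1)q : q ∈ V} ⊆ {0,…,N−1}. Then for every l ∈ ℕ, whenever x, y, u, v ∈ 𝕀(U+l) satisfy a·x + b·y = c·u + d·v, there exists j' ∈ {0, …, N−1} with x, y, u, v ∈ [j'/N, (j'+1)/N], where 𝕀(U+l) denotes the union of the intervals [j/N, (j+1)/N] over all j ∈ {0,…,N−1} with j ≡ q + l (mod N) for some q ∈ U. -/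
/-!
Each point of `𝕀(U + l)` lies in a cell `j_w = ((S+1)w + l) mod N` with `w ∈ V`. Multiplying the
equation by `N` shows that `a j_x + b j_y - c j_u - d j_v` has absolute value at most `S`. Modulo
`N` this integer is `(S+1)(a w_x + b w_y - c w_u - d w_v)`, the shift `l` cancelling because
`a + b = c + d`. As `w (S² + abcd) < N`, both sides are so small compared with `N ≥ S(S² + abcd)`
that the congruence is an equality when `abcd > S`; divisibility by `S + 1` then forces
`a w_x + b w_y = c w_u + d w_v`, so all `w`, hence all cells, coincide. If `abcd ≤ S` then
`a = b = c = d = 1`, and the hypothesis on `V` applied to `(x, y, x, y)` says `V` has at most one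
element.
-/

def II (N : ℕ) (U : Finset ℕ) (l : ℕ) : Set ℝ :=
  {x : ℝ | ∃ j : ℕ, j < N ∧ (∃ q ∈ U, j % N = (q + l) % N) ∧
    x ∈ Set.Icc ((j : ℝ) / N) (((j : ℝ) + 1) / N)}

open Set

lemma eq_one_of_mul_le_add {a b c d : ℕ} (ha : 0 < a) (hb : 0 < b) (hc : 0 < c) (hd : 0 < d)
    (hsum : a + b = c + d) (h : a * b * c * d ≤ a + b) : a = 1 ∧ b = 1 ∧ c = 1 ∧ d = 1 := by
  have hab : a + b ≤ a * b + 1 := by nlinarith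
  have hcd : c + d ≤ c * d + 1 := by nlinarith
  have : a + b ≤ 2 := by nlinarith
  omega

lemma mul_lt_of_lt_ceil_div {w N K : ℕ} (hK : 0 < K) (h : w < ⌈(N : ℝ) / K⌉₊) : w * K < N := by
  have := Nat.lt_ceil.mp h
  rw [lt_div_iff₀ (by exact_mod_cast hK)] at this
  exact_mod_cast this

lemma eq_zero_of_dvd_sub_mul {S P N X Y : ℤ} (hS : 0 < S) (hP : S < P) (hN : S * (S ^ 2 + P) ≤ N)
    (hX : |X| ≤ S) (hY : (S ^ 2 + P) * |Y| ≤ S * (N - 1)) (hdvd : N ∣ X - (S + 1) * Y) :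
    Y = 0 := by
  have hXY : X = (S + 1) * Y := by
    have hK : 0 < S ^ 2 + P := add_pos (pow_pos hS 2) (hS.trans hP)
    have hsub : |X - (S + 1) * Y| ≤ S + (S + 1) * |Y| := by
      calc |X - (S + 1) * Y| ≤ |X| + |(S + 1) * Y| := abs_sub _ _
        _ = |X| + (S + 1) * |Y| := by rw [abs_mul, abs_of_pos (by linarith : 0 < S + 1)]
        _ ≤ S + (S + 1) * |Y| := by linarith
    have hlt : |X - (S + 1) * Y| < N := by
      refine lt_of_mul_lt_mul_left ?_ hK.le
      have hN0 : 0 ≤ N := le_trans (by positivity) hN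
      calc (S ^ 2 + P) * |X - (S + 1) * Y|
            ≤ (S ^ 2 + P) * S + (S + 1) * ((S ^ 2 + P) * |Y|) := by nlinarith
        _ ≤ (S ^ 2 + P) * S + (S + 1) * (S * (N - 1)) := by gcongr
        _ < (S ^ 2 + P) * N := by nlinarith
    exact sub_eq_zero.mp (Int.eq_zero_of_abs_lt_dvd hdvd hlt)
  rw [hXY, abs_mul, abs_of_pos (by linarith : 0 < S + 1)] at hX
  exact abs_eq_zero.mp (by nlinarith [abs_nonneg Y])

lemma mul_abs_linear_sub_le {K N a b c d wx wy wu wv : ℕ} (hsum : a + b = c + d) (hx : wx * K < N)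
    (hy : wy * K < N) (hu : wu * K < N) (hv : wv * K < N) :
    (K : ℤ) * |(a * wx + b * wy : ℤ) - (c * wu + d * wv)| ≤ (a + b) * (N - 1) := by
  have hle : ∀ {p q w z : ℕ}, w * K < N → z * K < N →
      (K : ℤ) * (p * w + q * z) ≤ (p + q) * (N - 1) := by
    intro p q w z hw hz
    have hw' : (w * K : ℤ) ≤ N - 1 := by omega
    have hz' : (z * K : ℤ) ≤ N - 1 := by omega
    nlinarith [mul_le_mul_of_nonneg_left hw' (Int.natCast_nonneg p),
      mul_le_mul_of_nonneg_left hz' (Int.natCast_nonneg q)]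
  rw [← abs_of_nonneg (Int.natCast_nonneg K), ← abs_mul, mul_sub]
  refine abs_sub_le_of_nonneg_of_le (by positivity) (hle hx hy) (by positivity) ?_
  have hsum' : (a + b : ℤ) = c + d := by exact_mod_cast hsum
  rw [hsum']
  exact hle hu hv

lemma mul_mem_Icc_of_mem_Icc_div {N j x : ℝ} (hN : 0 < N) (hx : x ∈ Icc (j / N) ((j + 1) / N)) :
    x * N ∈ Icc j (j + 1) :=
  ⟨(div_le_iff₀ hN).mp hx.1, (le_div_iff₀ hN).mp hx.2⟩

lemma abs_linear_sub_le_of_mem_Icc {a b c d x y u v jx jy ju jv : ℝ} (ha : 0 ≤ a) (hb : 0 ≤ b)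
    (hc : 0 ≤ c) (hd : 0 ≤ d) (hsum : a + b = c + d) (heq : a * x + b * y = c * u + d * v)
    (hx : x ∈ Icc jx (jx + 1)) (hy : y ∈ Icc jy (jy + 1)) (hu : u ∈ Icc ju (ju + 1))
    (hv : v ∈ Icc jv (jv + 1)) :
    |a * jx + b * jy - (c * ju + d * jv)| ≤ a + b := by
  obtain ⟨hx₁, hx₂⟩ := hx
  obtain ⟨hy₁, hy₂⟩ := hy
  obtain ⟨hu₁, hu₂⟩ := hu
  obtain ⟨hv₁, hv₂⟩ := hv
  rw [abs_le]
  constructor <;> nlinarith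

lemma exists_mem_Icc_of_mem_II_image {N l : ℕ} {V : Finset ℕ} {f : ℕ → ℕ} {x : ℝ}
    (hx : x ∈ II N (V.image f) l) :
    ∃ w ∈ V, x ∈ Icc ((((f w + l) % N : ℕ) : ℝ) / N) ((((f w + l) % N : ℕ) + 1) / N) := by
  obtain ⟨j, hj, ⟨q, hq, hjq⟩, hx⟩ := hx
  obtain ⟨w, hw, rfl⟩ := Finset.mem_image.mp hq
  rw [← Nat.mod_eq_of_lt hj, hjq] at hx
  exact ⟨w, hw, hx⟩

lemma linear_eq_of_modEq {a b c d N l wx wy wu wv jx jy ju jv : ℕ} (hsum : a + b = c + d)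
    (habcd : a + b < a * b * c * d) (hN : (a + b) * ((a + b) ^ 2 + a * b * c * d) ≤ N)
    (hwx : wx * ((a + b) ^ 2 + a * b * c * d) < N) (hwy : wy * ((a + b) ^ 2 + a * b * c * d) < N)
    (hwu : wu * ((a + b) ^ 2 + a * b * c * d) < N) (hwv : wv * ((a + b) ^ 2 + a * b * c * d) < N)
    (hjx : jx ≡ (a + b + 1) * wx + l [MOD N]) (hjy : jy ≡ (a + b + 1) * wy + l [MOD N])
    (hju : ju ≡ (a + b + 1) * wu + l [MOD N]) (hjv : jv ≡ (a + b + 1) * wv + l [MOD N])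
    (hj : |(a * jx + b * jy : ℤ) - (c * ju + d * jv)| ≤ a + b) :
    a * wx + b * wy = c * wu + d * wv := by
  have hsum' : (a + b : ℤ) = c + d := by exact_mod_cast hsum
  obtain ⟨kx, hkx⟩ := Nat.modEq_iff_dvd.mp hjx
  obtain ⟨ky, hky⟩ := Nat.modEq_iff_dvd.mp hjy
  obtain ⟨ku, hku⟩ := Nat.modEq_iff_dvd.mp hju
  obtain ⟨kv, hkv⟩ := Nat.modEq_iff_dvd.mp hjv
  have hdvd : (N : ℤ) ∣ ((a * jx + b * jy : ℤ) - (c * ju + d * jv))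
      - (a + b + 1) * ((a * wx + b * wy : ℤ) - (c * wu + d * wv)) := by
    refine ⟨-(a * kx + b * ky - (c * ku + d * kv)), ?_⟩
    push_cast at hkx hky hku hkv
    linear_combination (-(a : ℤ)) * hkx - b * hky + c * hku + d * hkv + l * hsum'
  have hS : 0 < a + b := by
    rcases Nat.eq_zero_or_pos a with rfl | ha
    · simp at habcd
    · omega
  have hzero := eq_zero_of_dvd_sub_mul (S := a + b) (P := a * b * c * d) (by exact_mod_cast hS)
    (by exact_mod_cast habcd) (by exact_mod_cast hN) hj
    (by exact_mod_cast mul_abs_linear_sub_le hsum hwx hwy hwu hwv) hdvd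
  exact_mod_cast sub_eq_zero.mp hzero

/-- Fix positive integers `a, b, c, d` with `a + b = c + d = S`. There is a threshold
`N₀` (depending only on `a,b,c,d`) such that for all `N ≥ N₀`, with
`M = ⌈N/(S² + abcd)⌉`, for any `V ⊆ {0, …, M−1}` all of whose solutions of
`a·x + b·y = c·u + d·v` are constant, the set `U = (S+1)·V` satisfies
`U ⊆ {0, …, N−1}` and: for every shift `l ∈ ℕ`, any solution `x, y, u, v ∈ 𝕀(U+l)` of
`a·x + b·y = c·u + d·v` lies in a single interval `[j'/N, (j'+1)/N]`. -/
theorem stmt16 (a b c d : ℕ) (ha : 0 < a) (hb : 0 < b) (hc : 0 < c) (hd : 0 < d)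
    (hsum : a + b = c + d) :
    ∃ N₀ : ℕ, ∀ N : ℕ, N₀ ≤ N →
      ∀ V : Finset ℕ,
        V ⊆ Finset.range (Nat.ceil ((N : ℝ) / (((a + b : ℕ) : ℝ) ^ 2 + (a * b * c * d : ℕ)))) →
        (∀ x ∈ V, ∀ y ∈ V, ∀ u ∈ V, ∀ v ∈ V,
          a * x + b * y = c * u + d * v → x = y ∧ y = u ∧ u = v) →
        (V.image (fun q => (a + b + 1) * q)) ⊆ Finset.range N ∧
        ∀ l : ℕ, ∀ x y u v : ℝ,
          x ∈ II N (V.image (fun q => (a + b + 1) * q)) l →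
          y ∈ II N (V.image (fun q => (a + b + 1) * q)) l →
          u ∈ II N (V.image (fun q => (a + b + 1) * q)) l →
          v ∈ II N (V.image (fun q => (a + b + 1) * q)) l →
          (a : ℝ) * x + (b : ℝ) * y = (c : ℝ) * u + (d : ℝ) * v →
          ∃ j' : ℕ, j' < N ∧
            x ∈ Set.Icc ((j' : ℝ) / N) (((j' : ℝ) + 1) / N) ∧
            y ∈ Set.Icc ((j' : ℝ) / N) (((j' : ℝ) + 1) / N) ∧
            u ∈ Set.Icc ((j' : ℝ) / N) (((j' : ℝ) + 1) / N) ∧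
            v ∈ Set.Icc ((j' : ℝ) / N) (((j' : ℝ) + 1) / N) := by
  set K := (a + b) ^ 2 + a * b * c * d with hK
  have hK_pos : 0 < K := by positivity
  refine ⟨(a + b) * K, fun N hN V hV hSidon => ?_⟩
  have hN_pos : 0 < N := lt_of_lt_of_le (by positivity) hN
  have hVK : ∀ w ∈ V, w * K < N := fun w hw =>
    mul_lt_of_lt_ceil_div hK_pos (by exact_mod_cast Finset.mem_range.mp (hV hw))
  refine ⟨fun q hq => ?_, fun l x y u v hx hy hu hv heq => ?_⟩
  · obtain ⟨w, hw, rfl⟩ := Finset.mem_image.mp hq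
    have : a + b + 1 ≤ K := by nlinarith [Nat.mul_pos (Nat.mul_pos (Nat.mul_pos ha hb) hc) hd]
    exact Finset.mem_range.mpr (by nlinarith [hVK w hw])
  obtain ⟨wx, hwx, hx⟩ := exists_mem_Icc_of_mem_II_image hx
  obtain ⟨wy, hwy, hy⟩ := exists_mem_Icc_of_mem_II_image hy
  obtain ⟨wu, hwu, hu⟩ := exists_mem_Icc_of_mem_II_image hu
  obtain ⟨wv, hwv, hv⟩ := exists_mem_Icc_of_mem_II_image hv
  suffices wx = wy ∧ wy = wu ∧ wu = wv by
    obtain ⟨rfl, rfl, rfl⟩ := this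
    exact ⟨_, Nat.mod_lt _ hN_pos, hx, hy, hu, hv⟩
  rcases le_or_gt (a * b * c * d) (a + b) with hdeg | hdeg
  · obtain ⟨rfl, rfl, rfl, rfl⟩ := eq_one_of_mul_le_add ha hb hc hd hsum hdeg
    exact ⟨(hSidon _ hwx _ hwy _ hwx _ hwy rfl).1, (hSidon _ hwy _ hwu _ hwy _ hwu rfl).1,
      (hSidon _ hwu _ hwv _ hwu _ hwv rfl).1⟩
  have hN_pos' : (0 : ℝ) < N := by exact_mod_cast hN_pos
  have hj := abs_linear_sub_le_of_mem_Icc (Nat.cast_nonneg a) (Nat.cast_nonneg b)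
    (Nat.cast_nonneg c) (Nat.cast_nonneg d) (by exact_mod_cast hsum)
    (by linear_combination (N : ℝ) * heq)
    (mul_mem_Icc_of_mem_Icc_div hN_pos' hx) (mul_mem_Icc_of_mem_Icc_div hN_pos' hy)
    (mul_mem_Icc_of_mem_Icc_div hN_pos' hu) (mul_mem_Icc_of_mem_Icc_div hN_pos' hv)
  exact hSidon _ hwx _ hwy _ hwu _ hwv <| linear_eq_of_modEq hsum hdeg hN
    (hVK _ hwx) (hVK _ hwy) (hVK _ hwu) (hVK _ hwv) (Nat.mod_modEq _ _) (Nat.mod_modEq _ _)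
    (Nat.mod_modEq _ _) (Nat.mod_modEq _ _) (by exact_mod_cast hj)
end
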